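/- arXiv:2104.11286 — 2 statements merged into one kernel-verified Lean document; each statement's English description precedes it below -/
import Mathlib

section
/- Let V be a reflexive Banach space with a convex weakly closed subset K, Ψ : V → ℝ ∪ {+∞} convex lower semicontinuous and Gâteaux differentiable on K, Φ ∈ C¹(V, ℝ). If u₀ is a critical point of I_K = Ψ_K - Φ in the Szulkin sense and there exist a convex Gâteaux differentiable G : V → ℝ and v₀ ∈ K with DΨ(v₀) + DG(v₀) = DΦ(u₀) + DG(u₀), and additionally Ψ + G is strictly convex on K, then u₀ = v₀ ∈ K and DΨ(u₀) = DΦ(u₀). -/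
open Filter Topology

/-- `D` is the Gâteaux derivative of `F` at `x`. -/
def IsGateauxDerivAt {V : Type*} [NormedAddCommGroup V] [NormedSpace ℝ V]
    (F : V → ℝ) (D : V →L[ℝ] ℝ) (x : V) : Prop :=
  ∀ h : V, Tendsto (fun τ : ℝ => (F (x + τ • h) - F x) / τ) (𝓝[≠] 0) (𝓝 (D h))

/-- Gradient inequality for convex Gâteaux-differentiable functions. -/
lemma gateaux_convex_le {V : Type*} [NormedAddCommGroup V] [NormedSpace ℝ V]
    {F : V → ℝ} {D : V →L[ℝ] ℝ} {x : V}
    (hconv : ConvexOn ℝ Set.univ F) (hd : IsGateauxDerivAt F D x) (y : V) :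
    F x + D (y - x) ≤ F y := by
  have hten : Tendsto (fun τ : ℝ => (F (x + τ • (y - x)) - F x) / τ) (𝓝[>] 0)
      (𝓝 (D (y - x))) :=
    (hd (y - x)).mono_left (nhdsWithin_mono _ (fun t ht => ne_of_gt ht))
  have hbound : ∀ᶠ τ in 𝓝[>] (0:ℝ), (F (x + τ • (y - x)) - F x) / τ ≤ F y - F x := by
    filter_upwards [Ioc_mem_nhdsGT_of_mem (Set.mem_Ico.2 ⟨le_refl 0, zero_lt_one⟩)] with τ hτ
    obtain ⟨hτ0, hτ1⟩ := hτ
    have hpt : x + τ • (y - x) = (1 - τ) • x + τ • y := by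
      rw [smul_sub, sub_smul, one_smul]; abel
    have hcx := hconv.2 (Set.mem_univ x) (Set.mem_univ y)
      (by linarith : (0:ℝ) ≤ 1 - τ) hτ0.le (by ring)
    rw [← hpt] at hcx
    simp only [smul_eq_mul] at hcx
    rw [div_le_iff₀ hτ0]
    nlinarith [hcx]
  have := le_of_tendsto hten hbound
  linarith

/-- Abstract variational principle (Moameni): if `V` is a reflexive Banach space, `K ⊆ V`
convex and weakly closed, `Ψ` convex lsc and Gâteaux differentiable on `K`, `Φ ∈ C¹`,
`u₀` a Szulkin critical point of `I_K = Ψ_K - Φ`, and the pointwise invariance condition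
holds at `u₀` via a convex Gâteaux differentiable `G` with `Ψ + G` strictly convex on `K`,
then `u₀ = v₀ ∈ K` and `DΨ(u₀) = DΦ(u₀)`. -/
theorem stmt_14 (V : Type*) [NormedAddCommGroup V] [NormedSpace ℝ V] [CompleteSpace V]
    -- reflexivity: the canonical embedding into the double dual is surjective
    (hrefl : Function.Surjective (NormedSpace.inclusionInDoubleDual ℝ V))
    (K : Set V) (hKconv : Convex ℝ K)
    -- `K` is weakly closed
    (hKclosed : IsClosed (Set.image (toWeakSpace ℝ V) K))
    (Ψ G Φ : V → ℝ) (DΨ DG DΦ : V → V →L[ℝ] ℝ)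
    (hΨconv : ConvexOn ℝ Set.univ Ψ) (hΨlsc : LowerSemicontinuous Ψ)
    (hΨdiff : ∀ x ∈ K, IsGateauxDerivAt Ψ (DΨ x) x)
    (hGconv : ConvexOn ℝ Set.univ G)
    (hGdiff : ∀ x : V, IsGateauxDerivAt G (DG x) x)
    (hΦdiff : ∀ x : V, IsGateauxDerivAt Φ (DΦ x) x) (hΦC1 : Continuous DΦ)
    (hstrict : StrictConvexOn ℝ K (fun x => Ψ x + G x))
    (u₀ : V) (hu₀ : u₀ ∈ K)
    -- Szulkin critical point of `I_K = Ψ_K - Φ` (trivial for `v ∉ K`):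
    (hSzulkin : ∀ v ∈ K, DΦ u₀ (u₀ - v) + Ψ v - Ψ u₀ ≥ 0)
    (v₀ : V) (hv₀ : v₀ ∈ K)
    -- pointwise invariance condition:
    (hinv : DΨ v₀ + DG v₀ = DΦ u₀ + DG u₀) :
    u₀ = v₀ ∧ DΨ u₀ = DΦ u₀ := by
  have huv : u₀ = v₀ := by
    by_contra hne
    -- basic inequalities
    have hsz := hSzulkin v₀ hv₀
    have hΨgrad : Ψ v₀ + DΨ v₀ (u₀ - v₀) ≤ Ψ u₀ :=
      gateaux_convex_le hΨconv (hΨdiff v₀ hv₀) u₀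
    have hGgrad1 : G v₀ + DG v₀ (u₀ - v₀) ≤ G u₀ :=
      gateaux_convex_le hGconv (hGdiff v₀) u₀
    have hGgrad2 : G u₀ + DG u₀ (v₀ - u₀) ≤ G v₀ :=
      gateaux_convex_le hGconv (hGdiff u₀) v₀
    have hGneg : DG u₀ (v₀ - u₀) = - DG u₀ (u₀ - v₀) := by
      rw [← map_neg]; congr 1; abel
    rw [hGneg] at hGgrad2
    have hinv' : DΨ v₀ (u₀ - v₀) + DG v₀ (u₀ - v₀)
        = DΦ u₀ (u₀ - v₀) + DG u₀ (u₀ - v₀) := by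
      have := congrFun (congrArg DFunLike.coe hinv) (u₀ - v₀)
      simpa using this
    -- all inequalities are forced to equalities:
    have key : Ψ u₀ + G u₀ = Ψ v₀ + G v₀ + (DΨ v₀ (u₀ - v₀) + DG v₀ (u₀ - v₀)) := by
      linarith
    -- strict convexity at midpoint
    set m := (1/2 : ℝ) • u₀ + (1/2 : ℝ) • v₀ with hm
    have hmK : m ∈ K := hKconv hu₀ hv₀ (by norm_num) (by norm_num) (by norm_num)
    have hstr := hstrict.2 hu₀ hv₀ hne (by norm_num : (0:ℝ) < 1/2)
      (by norm_num : (0:ℝ) < 1/2) (by norm_num)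
    simp only [smul_eq_mul, ← hm] at hstr
    have hmv : m - v₀ = (1/2 : ℝ) • (u₀ - v₀) := by
      rw [hm, smul_sub]
      module
    have hΨm : Ψ v₀ + DΨ v₀ (m - v₀) ≤ Ψ m :=
      gateaux_convex_le hΨconv (hΨdiff v₀ hv₀) m
    have hGm : G v₀ + DG v₀ (m - v₀) ≤ G m :=
      gateaux_convex_le hGconv (hGdiff v₀) m
    rw [hmv, map_smul] at hΨm hGm
    simp only [smul_eq_mul] at hΨm hGm
    linarith
  refine ⟨huv, ?_⟩
  rw [← huv] at hinv
  exact add_right_cancel hinv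
end

section
/- Define μ₁ as the infimum of ∫₀^{π/2} |ψ'(θ)|² ω(θ) dθ over ψ ∈ H¹_loc(0, π/2) with ∫₀^{π/2} ψ²ω dθ = 1 and ∫₀^{π/2} ψω dθ = 0, where ω(θ) = cos^{m-1}(θ) sin^{n-1}(θ). Then μ₁ ≤ 2N with N = m + n, witnessed by a suitable normalization of ψ(θ) = (m-n)/N - cos(2θ). -/
/-!
The function `ψ(θ) = (m - n)/N - cos 2θ` is a Neumann eigenfunction with eigenvalue `2N`: its
flux `ω ψ' = 4 cos^m θ sin^n θ` vanishes at both endpoints and satisfies `-(ω ψ')' = 2N ω ψ`.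
Integrating this equation gives `∫ ψ ω = 0`, and integrating it against `ψ` by parts gives
`∫ ψ'² ω = 2N ∫ ψ² ω`, so the normalization of `ψ` has Rayleigh quotient exactly `2N`.
-/

open Real Set intervalIntegral

def rayleighValues (ω : ℝ → ℝ) (a b : ℝ) : Set ℝ :=
  {μ : ℝ | ∃ ψ : ℝ → ℝ, ContDiffOn ℝ 1 ψ (Ioo a b) ∧
    (∫ θ in a..b, ψ θ ^ 2 * ω θ) = 1 ∧
    (∫ θ in a..b, ψ θ * ω θ) = 0 ∧
    μ = ∫ θ in a..b, (deriv ψ θ) ^ 2 * ω θ}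

section RayleighValues

variable {ω : ℝ → ℝ} {a b : ℝ}

theorem rayleighValues_bddBelow (hab : a ≤ b) (hω : ∀ x ∈ Icc a b, 0 ≤ ω x) :
    BddBelow (rayleighValues ω a b) := by
  refine ⟨0, ?_⟩
  rintro μ ⟨ψ, -, -, -, rfl⟩
  exact integral_nonneg hab fun x hx => mul_nonneg (sq_nonneg _) (hω x hx)

theorem div_mem_rayleighValues {ψ : ℝ → ℝ} (hψ : ContDiffOn ℝ 1 ψ (Ioo a b))
    (horth : ∫ x in a..b, ψ x * ω x = 0) (hpos : 0 < ∫ x in a..b, ψ x ^ 2 * ω x) :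
    (∫ x in a..b, deriv ψ x ^ 2 * ω x) / (∫ x in a..b, ψ x ^ 2 * ω x) ∈
      rayleighValues ω a b := by
  set c := (√(∫ x in a..b, ψ x ^ 2 * ω x))⁻¹
  have hc : c ^ 2 = (∫ x in a..b, ψ x ^ 2 * ω x)⁻¹ := by rw [inv_pow, sq_sqrt hpos.le]
  refine ⟨fun x => c * ψ x, contDiffOn_const.mul hψ, ?_, ?_, ?_⟩
  · simp_rw [mul_pow, mul_assoc, integral_const_mul, hc]
    exact inv_mul_cancel₀ hpos.ne'
  · simp_rw [mul_assoc, integral_const_mul, horth, mul_zero]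
  · simp_rw [deriv_const_mul_field', mul_pow, mul_assoc, integral_const_mul, hc]
    exact div_eq_inv_mul _ _

end RayleighValues

section Flux

variable {a b μ : ℝ} {ω ψ F : ℝ → ℝ}

theorem integral_mul_eq_zero_of_hasDerivAt_flux (hμ : μ ≠ 0) (hω : Continuous ω)
    (hψ : Continuous ψ) (hFa : F a = 0) (hFb : F b = 0)
    (hF' : ∀ x ∈ uIcc a b, HasDerivAt F (-(μ * (ψ x * ω x))) x) :
    ∫ x in a..b, ψ x * ω x = 0 := by
  have hint := integral_eq_sub_of_hasDerivAt hF'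
    ((by fun_prop : Continuous fun x => -(μ * (ψ x * ω x))).intervalIntegrable _ _)
  rw [hFa, hFb, sub_zero, integral_neg, integral_const_mul, neg_eq_zero] at hint
  exact (mul_eq_zero.mp hint).resolve_left hμ

theorem integral_deriv_sq_mul_eq_of_hasDerivAt_flux (hω : Continuous ω) (hψ : ContDiff ℝ 1 ψ)
    (hF : ∀ x ∈ uIcc a b, F x = deriv ψ x * ω x) (hFa : F a = 0) (hFb : F b = 0)
    (hF' : ∀ x ∈ uIcc a b, HasDerivAt F (-(μ * (ψ x * ω x))) x) :
    ∫ x in a..b, deriv ψ x ^ 2 * ω x = μ * ∫ x in a..b, ψ x ^ 2 * ω x := by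
  have hψd : Differentiable ℝ ψ := hψ.differentiable one_ne_zero
  have hparts := integral_mul_deriv_eq_deriv_mul hF' (fun x _ => (hψd x).hasDerivAt)
    ((by fun_prop : Continuous fun x => -(μ * (ψ x * ω x))).intervalIntegrable _ _)
    ((hψ.continuous_deriv le_rfl).intervalIntegrable _ _)
  rw [hFa, hFb, zero_mul, zero_mul, sub_zero, zero_sub] at hparts
  calc ∫ x in a..b, deriv ψ x ^ 2 * ω x = ∫ x in a..b, F x * deriv ψ x :=
        integral_congr fun x hx => by rw [hF x hx]; ring
    _ = μ * ∫ x in a..b, ψ x ^ 2 * ω x := by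
        rw [hparts, ← integral_neg, ← integral_const_mul]
        exact integral_congr fun x _ => by ring

theorem mem_rayleighValues_of_hasDerivAt_flux (hμ : 0 < μ) (hω : Continuous ω)
    (hψ : ContDiff ℝ 1 ψ) (hF : ∀ x ∈ uIcc a b, F x = deriv ψ x * ω x)
    (hFa : F a = 0) (hFb : F b = 0)
    (hF' : ∀ x ∈ uIcc a b, HasDerivAt F (-(μ * (ψ x * ω x))) x)
    (hpos : 0 < ∫ x in a..b, deriv ψ x ^ 2 * ω x) :
    μ ∈ rayleighValues ω a b := by
  have henergy := integral_deriv_sq_mul_eq_of_hasDerivAt_flux hω hψ hF hFa hFb hF'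
  have hmass : 0 < ∫ x in a..b, ψ x ^ 2 * ω x := by
    rw [henergy] at hpos
    exact pos_of_mul_pos_right hpos hμ.le
  have hmem := div_mem_rayleighValues hψ.contDiffOn
    (integral_mul_eq_zero_of_hasDerivAt_flux hμ.ne' hω hψ.continuous hFa hFb hF') hmass
  rwa [henergy, mul_div_cancel_right₀ _ hmass.ne'] at hmem

end Flux

theorem hasDerivAt_cos_pow_succ_mul_sin_pow_succ (k l : ℕ) (θ : ℝ) :
    HasDerivAt (fun θ => cos θ ^ (k + 1) * sin θ ^ (l + 1))
      (cos θ ^ k * sin θ ^ l * ((l + 1) * cos θ ^ 2 - (k + 1) * sin θ ^ 2)) θ := by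
  refine (((hasDerivAt_cos θ).fun_pow (k + 1)).mul
    ((hasDerivAt_sin θ).fun_pow (l + 1))).congr_deriv ?_
  simp only [Nat.add_sub_cancel]
  push_cast
  ring

theorem two_mul_add_mem_rayleighValues_cos_pow_mul_sin_pow (k l : ℕ) :
    2 * ((k + 1 : ℝ) + (l + 1)) ∈
      rayleighValues (fun θ => cos θ ^ k * sin θ ^ l) 0 (π / 2) := by
  set ψ : ℝ → ℝ := fun θ => ((k : ℝ) - l) / (k + l + 2) - cos (2 * θ)
  have hψ' (θ : ℝ) : deriv ψ θ = 2 * sin (2 * θ) := by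
    refine ((((hasDerivAt_id θ).const_mul 2).cos).const_sub _).deriv.trans ?_
    simp only [id, mul_one, neg_mul]
    ring
  refine mem_rayleighValues_of_hasDerivAt_flux
    (ψ := ψ) (F := fun θ => 4 * (cos θ ^ (k + 1) * sin θ ^ (l + 1)))
    (by positivity) (by fun_prop) (by fun_prop) (fun θ _ => ?_) (by simp) (by simp)
    (fun θ _ => ?_) ?_
  · rw [hψ', sin_two_mul]
    ring
  · refine ((hasDerivAt_cos_pow_succ_mul_sin_pow_succ k l θ).const_mul 4).congr_deriv ?_
    have hN : (k : ℝ) + l + 2 ≠ 0 := by positivity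
    simp only [ψ, cos_two_mul, sin_sq]
    field_simp
    ring
  · simp only [hψ']
    refine intervalIntegral_pos_of_pos_on ((by fun_prop : Continuous _).intervalIntegrable _ _)
      (fun θ hθ => ?_) (by positivity)
    have hcos := cos_pos_of_mem_Ioo ⟨by linarith [hθ.1, pi_pos], hθ.2⟩
    have hsin := sin_pos_of_pos_of_lt_pi hθ.1 (by linarith [hθ.2, pi_pos])
    have hsin2 : 0 < sin (2 * θ) :=
      sin_pos_of_pos_of_lt_pi (by linarith [hθ.1]) (by linarith [hθ.2])
    positivity

/-- The second eigenvalue `μ₁`, defined as the infimum of `∫₀^{π/2} ψ'² ω` over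
normalized functions `ψ` orthogonal to constants with respect to the weight
`ω(θ) = cos^{m-1}θ sin^{n-1}θ`, satisfies `μ₁ ≤ 2N` where `N = m + n`. -/
theorem stmt_15 (m n : ℕ) (hm : 1 ≤ m) (hn : 1 ≤ n) (N : ℕ) (hN : N = m + n)
    (ω : ℝ → ℝ)
    (hω : ∀ θ, ω θ = Real.cos θ ^ (m - 1) * Real.sin θ ^ (n - 1))
    (μ₁ : ℝ)
    (hμ₁ : μ₁ = sInf {μ : ℝ | ∃ ψ : ℝ → ℝ, ContDiffOn ℝ 1 ψ (Ioo 0 (π / 2)) ∧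
      (∫ θ in (0 : ℝ)..(π / 2), ψ θ ^ 2 * ω θ) = 1 ∧
      (∫ θ in (0 : ℝ)..(π / 2), ψ θ * ω θ) = 0 ∧
      μ = ∫ θ in (0 : ℝ)..(π / 2), (deriv ψ θ) ^ 2 * ω θ}) :
    μ₁ ≤ 2 * N := by
  obtain ⟨k, rfl⟩ := Nat.exists_eq_add_of_le' hm
  obtain ⟨l, rfl⟩ := Nat.exists_eq_add_of_le' hn
  obtain rfl : ω = fun θ => cos θ ^ k * sin θ ^ l := funext fun θ => by simpa using hω θ
  subst hN hμ₁
  refine csInf_le (rayleighValues_bddBelow (by positivity) fun θ hθ => ?_) ?_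
  · have hcos := cos_nonneg_of_mem_Icc ⟨by linarith [hθ.1, pi_pos], hθ.2⟩
    have hsin := sin_nonneg_of_nonneg_of_le_pi hθ.1 (by linarith [hθ.2, pi_pos])
    positivity
  · exact_mod_cast two_mul_add_mem_rayleighValues_cos_pow_mul_sin_pow k l
end
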